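/- Let T ∈ ℝ^{n₁×…×n_d} be nonzero with symmetry decomposition [d] = α₁ ∪ … ∪ α_m (T is symmetric with respect to each α_j). Then there exists a best rank one approximation a·(u₁⊗…⊗u_d) of T such that u_p = u_q whenever p,q belong to the same block α_j. -/

import Mathlib

/-!
Among the unit tuples `u` maximising `⟨T, u₁ ⊗ ⋯ ⊗ u_d⟩²` pick one that also maximises the block
energy `∑_α ‖∑_{j ∈ α} u_j‖²`. For `p ≠ q` in one block, symmetry of `T` makes
`K v w = ⟨T, u with v in slot p and w in slot q⟩` a symmetric bilinear form, and `K²` is maximal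
at `(u_p, u_q)`, with value `C²`. Hence `K(·, u_q) = C ⟨·, u_p⟩` and `K(·, u_p) = C ⟨·, u_q⟩`, so if
`u_p ≠ u_q` the normalised bisector `v` of `u_p, u_q` still has `K(v, v)² = C²`. Putting `±v` into
both slots keeps the tuple a maximiser and, for the right sign, strictly increases the block
energy, because `‖u_p + u_q‖ < 2`. Finally, for unit vectors `x_j`,
`‖T - s x₁ ⊗ ⋯ ⊗ x_d‖² = ‖T‖² - 2s⟨T, x₁ ⊗ ⋯ ⊗ x_d⟩ + s²`, so `C u₁ ⊗ ⋯ ⊗ u_d` is a best rank one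
approximation.
-/

noncomputable section

/-- The decomposable tensor `x₁ ⊗ ⋯ ⊗ x_d`, as a multi-indexed array. -/
def dtens {ι : Type*} [Fintype ι] {n : ι → ℕ} (x : ∀ j, Fin (n j) → ℝ) :
    (∀ j, Fin (n j)) → ℝ :=
  fun idx => ∏ j, x j (idx j)

/-- Entrywise inner product of tensors. -/
def tinner {ι : Type*} [Fintype ι] [DecidableEq ι] {n : ι → ℕ}
    (S T : (∀ j, Fin (n j)) → ℝ) : ℝ :=
  ∑ idx, S idx * T idx

/-- Hilbert–Schmidt norm of a tensor. -/
def hsNorm {ι : Type*} [Fintype ι] [DecidableEq ι] {n : ι → ℕ}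
    (T : (∀ j, Fin (n j)) → ℝ) : ℝ :=
  Real.sqrt (∑ idx, T idx ^ 2)

/-- `v` is a unit vector in `ℝ^m`. -/
def isUnitVec {m : ℕ} (v : Fin m → ℝ) : Prop := ∑ i, v i ^ 2 = 1

/-- The spectral (`(∞,2)`-Schatten) norm of a tensor: the supremum of
`|⟨T, x₁ ⊗ ⋯ ⊗ x_d⟩|` over unit vectors `x_j`. -/
def specNorm {ι : Type*} [Fintype ι] [DecidableEq ι] {n : ι → ℕ}
    (T : (∀ j, Fin (n j)) → ℝ) : ℝ :=
  sSup {r | ∃ x : ∀ j, Fin (n j) → ℝ, (∀ j, isUnitVec (x j)) ∧ r = |tinner T (dtens x)|}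

/-- The multi-index obtained from `idx` by interchanging the entries in positions `p`
and `q` (which have equal dimensions). -/
def swapAt {d : ℕ} {n : Fin d → ℕ} (p q : Fin d) (hpq : n p = n q)
    (idx : ∀ j, Fin (n j)) : ∀ j, Fin (n j) :=
  fun j =>
    if h : j = p then Fin.cast (show n q = n j by rw [h, hpq]) (idx q)
    else if h' : j = q then Fin.cast (show n p = n j by rw [h', hpq]) (idx p)
    else idx j

open Function Matrix

section DotProduct

variable {N : ℕ}

lemma isUnitVec_iff_dotProduct_self {v : Fin N → ℝ} : isUnitVec v ↔ v ⬝ᵥ v = 1 := by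
  simp [isUnitVec, dotProduct, sq]

lemma isUnitVec_inv_sqrt_smul {v : Fin N → ℝ} (hv : v ≠ 0) :
    isUnitVec ((√(v ⬝ᵥ v))⁻¹ • v) := by
  have hpos : 0 < v ⬝ᵥ v := by simpa using dotProduct_self_star_pos_iff.mpr hv
  rw [isUnitVec_iff_dotProduct_self, smul_dotProduct, dotProduct_smul, smul_eq_mul,
    smul_eq_mul, ← mul_assoc, ← mul_inv, Real.mul_self_sqrt hpos.le, inv_mul_cancel₀ hpos.ne']

lemma LinearMap.eq_mul_dotProduct_of_sq_le (L : (Fin N → ℝ) →ₗ[ℝ] ℝ) {z : Fin N → ℝ}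
    (hz : isUnitVec z) (hmax : ∀ y, isUnitVec y → L y ^ 2 ≤ L z ^ 2) (y : Fin N → ℝ) :
    L y = L z * (y ⬝ᵥ z) := by
  set l : Fin N → ℝ := fun i => L fun j => if i = j then 1 else 0
  have hL : ∀ y, L y = y ⬝ᵥ l := fun y => by
    rw [L.pi_apply_eq_sum_univ]; rfl
  have hl : l ⬝ᵥ l ≤ L z ^ 2 := by
    by_cases hl0 : l = 0
    · simpa [hl0] using sq_nonneg (L z)
    · have hpos : 0 < l ⬝ᵥ l := by simpa using dotProduct_self_star_pos_iff.mpr hl0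
      have hsq : L ((√(l ⬝ᵥ l))⁻¹ • l) = √(l ⬝ᵥ l) := by
        rw [hL, smul_dotProduct, smul_eq_mul, inv_mul_eq_div, Real.div_sqrt]
      have h := hmax _ (isUnitVec_inv_sqrt_smul hl0)
      rwa [hsq, Real.sq_sqrt hpos.le] at h
  have hzero : (l - L z • z) ⬝ᵥ (l - L z • z) = 0 := by
    have hz' := isUnitVec_iff_dotProduct_self.mp hz
    have hlz : z ⬝ᵥ l = L z := (hL z).symm
    refine le_antisymm ?_ (dotProduct_self_star_nonneg _)
    simp only [sub_dotProduct, dotProduct_sub, smul_dotProduct, dotProduct_smul, smul_eq_mul,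
      hz', dotProduct_comm l z, hlz]
    nlinarith
  rw [hL, sub_eq_zero.mp (dotProduct_self_eq_zero.mp hzero), dotProduct_smul, smul_eq_mul]

end DotProduct

lemma exists_sq_eq_one_mul_pos {r : ℝ} (hr : |r| < 2) (x : ℝ) :
    ∃ s : ℝ, s ^ 2 = 1 ∧ 0 < (2 * s - r) * (2 * x + (2 * s - r)) := by
  obtain ⟨hr₁, hr₂⟩ := abs_lt.mp hr
  rcases le_or_gt 0 x with hx | hx
  · exact ⟨1, one_pow 2, by nlinarith⟩
  · exact ⟨-1, by norm_num, by nlinarith⟩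

namespace LinearMap.BilinForm

variable {N : ℕ} (B : LinearMap.BilinForm ℝ (Fin N → ℝ)) {a b : Fin N → ℝ}

lemma apply_right_eq_of_sq_le (ha : isUnitVec a) (hb : isUnitVec b)
    (hmax : ∀ v w, isUnitVec v → isUnitVec w → B v w ^ 2 ≤ B a b ^ 2) (y : Fin N → ℝ) :
    B y b = B a b * (y ⬝ᵥ a) :=
  (B.flip b).eq_mul_dotProduct_of_sq_le ha (fun v hv => hmax v b hv hb) y

lemma apply_left_eq_of_sq_le (hB : ∀ v w, B v w = B w v) (ha : isUnitVec a) (hb : isUnitVec b)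
    (hmax : ∀ v w, isUnitVec v → isUnitVec w → B v w ^ 2 ≤ B a b ^ 2) (y : Fin N → ℝ) :
    B y a = B a b * (y ⬝ᵥ b) := by
  have h := (B.flip a).eq_mul_dotProduct_of_sq_le hb
    (fun v hv => by simpa only [flip_apply, hB b a, hB v a] using hmax a v ha hv) y
  simpa only [flip_apply, hB b a] using h

/-- The witness `v` is the normalised bisector of `a` and `b`, or `a` itself if `b = -a`. -/
lemma exists_sq_apply_self_eq (hB : ∀ v w, B v w = B w v) (ha : isUnitVec a) (hb : isUnitVec b)
    (hmax : ∀ v w, isUnitVec v → isUnitVec w → B v w ^ 2 ≤ B a b ^ 2) (hab : a ≠ b) :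
    ∃ (v : Fin N → ℝ) (r : ℝ), isUnitVec v ∧ a + b = r • v ∧ |r| < 2 ∧
      B v v ^ 2 = B a b ^ 2 := by
  have ha' := isUnitVec_iff_dotProduct_self.mp ha
  have hb' := isUnitVec_iff_dotProduct_self.mp hb
  have hBaa := B.apply_left_eq_of_sq_le hB ha hb hmax a
  have hBbb := B.apply_right_eq_of_sq_le ha hb hmax b
  have hsub : 0 < (a - b) ⬝ᵥ (a - b) := by
    simpa using dotProduct_self_star_pos_iff.mpr (sub_ne_zero.mpr hab)
  have hadd : (a + b) ⬝ᵥ (a + b) = 2 + 2 * (a ⬝ᵥ b) := by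
    simp only [add_dotProduct, dotProduct_add, ha', hb', dotProduct_comm b a]; ring
  rw [sub_dotProduct, dotProduct_sub, dotProduct_sub, ha', hb', dotProduct_comm b a] at hsub
  by_cases hab0 : a + b = 0
  · refine ⟨a, 0, ha, by rw [hab0, zero_smul], by simp, ?_⟩
    have ht : a ⬝ᵥ b = -1 := by
      rw [eq_neg_of_add_eq_zero_right hab0, dotProduct_neg, ha']
    rw [hBaa, ht]; ring
  · set r := √((a + b) ⬝ᵥ (a + b))
    have hpos : 0 < (a + b) ⬝ᵥ (a + b) := by simpa using dotProduct_self_star_pos_iff.mpr hab0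
    have hr : 0 < r := Real.sqrt_pos.mpr hpos
    have hr2 : r ^ 2 = 2 + 2 * (a ⬝ᵥ b) := by rw [Real.sq_sqrt hpos.le, hadd]
    refine ⟨r⁻¹ • (a + b), r, isUnitVec_inv_sqrt_smul hab0, by rw [smul_inv_smul₀ hr.ne'], ?_, ?_⟩
    · rw [abs_of_pos hr]; nlinarith
    · have hsum : B (a + b) (a + b) = B a b * r ^ 2 := by
        rw [map_add, map_add, LinearMap.add_apply, LinearMap.add_apply, hBaa, hBbb, hB b a,
          dotProduct_comm b a, hr2]
        ring
      simp only [map_smul, smul_apply, smul_eq_mul, hsum]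
      field_simp

end LinearMap.BilinForm

section Tensor

variable {ι : Type*} [Fintype ι] [DecidableEq ι] {n : ι → ℕ}

def tensorPairing (T : (∀ j, Fin (n j)) → ℝ) :
    MultilinearMap ℝ (fun j => Fin (n j) → ℝ) ℝ :=
  ∑ idx, T idx • (MultilinearMap.mkPiAlgebra ℝ ι ℝ).compLinearMap fun j => LinearMap.proj (idx j)

lemma sum_dtens_sq {x : ∀ j, Fin (n j) → ℝ} (hx : ∀ j, isUnitVec (x j)) :
    ∑ idx, dtens x idx ^ 2 = 1 := by
  simp only [dtens, ← Finset.prod_pow]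
  rw [← Fintype.prod_sum (fun j (i : Fin (n j)) => x j i ^ 2)]
  exact Finset.prod_eq_one fun j _ => hx j

lemma tensorPairing_apply (T : (∀ j, Fin (n j)) → ℝ) (x : ∀ j, Fin (n j) → ℝ) :
    tensorPairing T x = tinner T (dtens x) := by
  simp [tensorPairing, tinner, dtens]

lemma continuous_tinner_dtens (T : (∀ j, Fin (n j)) → ℝ) :
    Continuous fun x : ∀ j, Fin (n j) → ℝ => tinner T (dtens x) := by
  unfold tinner dtens
  fun_prop

lemma sum_sub_smul_dtens_sq (T : (∀ j, Fin (n j)) → ℝ) {x : ∀ j, Fin (n j) → ℝ}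
    (hx : ∀ j, isUnitVec (x j)) (s : ℝ) :
    ∑ idx, (T - s • dtens x) idx ^ 2 = ∑ idx, T idx ^ 2 - 2 * s * tinner T (dtens x) + s ^ 2 := by
  have h : ∀ idx, (T - s • dtens x) idx ^ 2 =
      T idx ^ 2 - 2 * s * (T idx * dtens x idx) + s ^ 2 * dtens x idx ^ 2 := fun idx => by
    simp only [Pi.sub_apply, Pi.smul_apply, smul_eq_mul]; ring
  simp only [h, Finset.sum_add_distrib, Finset.sum_sub_distrib, ← Finset.mul_sum, sum_dtens_sq hx,
    tinner, mul_one]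

lemma hsNorm_sub_smul_dtens_le (T : (∀ j, Fin (n j)) → ℝ) {u x : ∀ j, Fin (n j) → ℝ}
    (hu : ∀ j, isUnitVec (u j)) (hx : ∀ j, isUnitVec (x j))
    (h : tinner T (dtens x) ^ 2 ≤ tinner T (dtens u) ^ 2) (s : ℝ) :
    hsNorm (T - tinner T (dtens u) • dtens u) ≤ hsNorm (T - s • dtens x) := by
  apply Real.sqrt_le_sqrt
  rw [sum_sub_smul_dtens_sq T hu, sum_sub_smul_dtens_sq T hx]
  nlinarith [sq_nonneg (s - tinner T (dtens x))]

end Tensor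

section UnitTuples

variable {ι : Type*} {n : ι → ℕ}

variable (n) in
def unitTuples : Set (∀ j, Fin (n j) → ℝ) := {x | ∀ j, isUnitVec (x j)}

lemma isCompact_setOf_isUnitVec (k : ℕ) : IsCompact {v : Fin k → ℝ | isUnitVec v} := by
  have h : {v : Fin k → ℝ | isUnitVec v} =
      (EuclideanSpace.equiv (Fin k) ℝ).symm ⁻¹' Metric.sphere 0 1 := by
    ext v
    simp [isUnitVec, EuclideanSpace.norm_eq]
  rw [h]
  exact (EuclideanSpace.equiv (Fin k) ℝ).toHomeomorph.symm.isCompact_preimage.mpr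
    (isCompact_sphere 0 1)

variable (n) in
lemma isCompact_unitTuples : IsCompact (unitTuples n) := by
  convert isCompact_univ_pi fun j => isCompact_setOf_isUnitVec (n j)
  simp [unitTuples, Set.pi]

lemma unitTuples_nonempty (hn : ∀ j, 0 < n j) : (unitTuples n).Nonempty :=
  ⟨fun j => Pi.single ⟨0, hn j⟩ 1, fun j => by simp [isUnitVec, Pi.single_apply]⟩

end UnitTuples

lemma isUnitVec_comp_finCast {k l : ℕ} (e : k = l) {w : Fin l → ℝ} :
    isUnitVec (fun i => w (Fin.cast e i)) ↔ isUnitVec w := by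
  subst e; simp

section UpdatePair

variable {ι : Type*} [DecidableEq ι] {n : ι → ℕ} {p q : ι}

def updatePair (x : ∀ j, Fin (n j) → ℝ) (e : n p = n q) (v w : Fin (n p) → ℝ) :
    ∀ j, Fin (n j) → ℝ :=
  update (update x p v) q fun i => w (Fin.cast e.symm i)

lemma updatePair_self (x : ∀ j, Fin (n j) → ℝ) (e : n p = n q) :
    updatePair x e (x p) (fun k => x q (Fin.cast e k)) = x := by
  simp [updatePair]

lemma updatePair_mem_unitTuples {x : ∀ j, Fin (n j) → ℝ} (hx : x ∈ unitTuples n) (hpq : p ≠ q)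
    (e : n p = n q) {v w : Fin (n p) → ℝ} (hv : isUnitVec v) (hw : isUnitVec w) :
    updatePair x e v w ∈ unitTuples n := by
  intro j
  by_cases hjq : j = q
  · subst hjq
    simpa [updatePair] using (isUnitVec_comp_finCast e.symm).mpr hw
  · by_cases hjp : j = p
    · subst hjp
      simpa [updatePair, update_of_ne hpq] using hv
    · simpa [updatePair, update_of_ne hjq, update_of_ne hjp] using hx j

end UpdatePair

section SlotPair

variable {ι : Type*} [Fintype ι] [DecidableEq ι] {n : ι → ℕ} {p q : ι}

def slotPairForm (T : (∀ j, Fin (n j)) → ℝ) (x : ∀ j, Fin (n j) → ℝ) (hpq : p ≠ q)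
    (e : n p = n q) : LinearMap.BilinForm ℝ (Fin (n p) → ℝ) :=
  LinearMap.mk₂ ℝ (fun v w => tensorPairing T (updatePair x e v w))
    (fun v v' w => by
      simp only [updatePair, update_comm hpq]
      exact MultilinearMap.map_update_add _ _ _ _ _)
    (fun s v w => by
      simp only [updatePair, update_comm hpq]
      exact MultilinearMap.map_update_smul _ _ _ _ _)
    (fun v w w' => MultilinearMap.map_update_add _ _ _ _ _)
    (fun s v w => MultilinearMap.map_update_smul _ _ _ _ _)

lemma slotPairForm_apply (T : (∀ j, Fin (n j)) → ℝ) (x : ∀ j, Fin (n j) → ℝ) (hpq : p ≠ q)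
    (e : n p = n q) (v w : Fin (n p) → ℝ) :
    slotPairForm T x hpq e v w = tinner T (dtens (updatePair x e v w)) :=
  tensorPairing_apply T _

end SlotPair

section SwapAt

variable {d : ℕ} {n : Fin d → ℕ} {p q : Fin d} (e : n p = n q) (idx : ∀ j, Fin (n j))

lemma swapAt_apply_left : swapAt p q e idx p = Fin.cast e.symm (idx q) := by
  simp [swapAt]

lemma swapAt_apply_right (hpq : p ≠ q) : swapAt p q e idx q = Fin.cast e (idx p) := by
  simp [swapAt, hpq.symm]

lemma swapAt_apply_of_ne {j : Fin d} (hjp : j ≠ p) (hjq : j ≠ q) : swapAt p q e idx j = idx j := by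
  simp [swapAt, hjp, hjq]

lemma swapAt_involutive (hpq : p ≠ q) : Involutive (swapAt p q e) := by
  intro idx
  funext j
  by_cases hjp : j = p
  · subst hjp
    simp [swapAt_apply_left, swapAt_apply_right e _ hpq]
  · by_cases hjq : j = q
    · subst hjq
      simp [swapAt_apply_left, swapAt_apply_right e _ hpq]
    · rw [swapAt_apply_of_ne e _ hjp hjq, swapAt_apply_of_ne e _ hjp hjq]

lemma slotPairForm_comm (T : (∀ j, Fin (n j)) → ℝ) (x : ∀ j, Fin (n j) → ℝ) (hpq : p ≠ q)
    (hT : ∀ idx, T (swapAt p q e idx) = T idx) (v w : Fin (n p) → ℝ) :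
    slotPairForm T x hpq e v w = slotPairForm T x hpq e w v := by
  rw [slotPairForm_apply, slotPairForm_apply]
  refine Fintype.sum_equiv (swapAt_involutive e hpq).toPerm _ _ fun idx => ?_
  rw [Involutive.coe_toPerm, hT]
  congr 1
  refine Fintype.prod_equiv (Equiv.swap p q) _ _ fun j => ?_
  unfold updatePair
  by_cases hjp : j = p
  · subst hjp
    rw [Equiv.swap_apply_left, swapAt_apply_right e _ hpq, update_of_ne hpq, update_self,
      update_self, Fin.cast_cast, Fin.cast_eq_self]
  · by_cases hjq : j = q
    · subst hjq
      rw [Equiv.swap_apply_right, swapAt_apply_left, update_self, update_of_ne hpq, update_self]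
    · rw [Equiv.swap_apply_of_ne_of_ne hjp hjq, swapAt_apply_of_ne e _ hjp hjq,
        update_of_ne hjq, update_of_ne hjp, update_of_ne hjq, update_of_ne hjp]

end SwapAt

lemma extend_dotProduct_extend {α β : Type*} [Fintype α] [Fintype β] {s : α → β}
    (hs : Injective s) (v w : α → ℝ) : extend s v 0 ⬝ᵥ extend s w 0 = v ⬝ᵥ w := by
  refine (Fintype.sum_of_injective s hs _ _ (fun k hk => ?_) fun i => ?_).symm
  · simp [extend_apply' _ _ _ (by simpa using hk)]
  · simp [hs.extend_apply]

section BlockEnergy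

variable {ι κ : Type*} [Fintype ι] {n : ι → ℕ}

variable (n) in
/-- Zero-padding into a space common to all slots, so that the vectors of a block can be added. -/
def pad (j : ι) : (Fin (n j) → ℝ) →ₗ[ℝ] Fin (∑ i, n i) → ℝ :=
  ExtendByZero.linearMap ℝ (Fin.castLE (Finset.single_le_sum (fun i _ => Nat.zero_le (n i))
    (Finset.mem_univ j)))

lemma pad_dotProduct_pad (j : ι) (v w : Fin (n j) → ℝ) : pad n j v ⬝ᵥ pad n j w = v ⬝ᵥ w :=
  extend_dotProduct_extend (Fin.castLE_injective _) v w

lemma pad_finCast {p q : ι} (e : n q = n p) (v : Fin (n p) → ℝ) :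
    pad n q (fun i => v (Fin.cast e i)) = pad n p v := by
  have key : ∀ {k l D : ℕ} (e : l = k) (hk : k ≤ D) (hl : l ≤ D) (v : Fin k → ℝ),
      extend (Fin.castLE hl) (fun i => v (Fin.cast e i)) 0 = extend (Fin.castLE hk) v 0 := by
    intro k l D e _ _ v
    subst e
    rfl
  exact key e _ _ v

lemma continuous_pad (j : ι) : Continuous (pad n j) :=
  (pad n j).continuous_of_finiteDimensional

variable [DecidableEq κ]

def blockSum (c : ι → κ) (x : ∀ j, Fin (n j) → ℝ) (i : κ) : Fin (∑ j, n j) → ℝ :=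
  ∑ j with c j = i, pad n j (x j)

lemma blockSum_updatePair [DecidableEq ι] {p q : ι} (c : ι → κ) (x : ∀ j, Fin (n j) → ℝ)
    (hpq : p ≠ q) (e : n p = n q) (hc : c p = c q) (v w : Fin (n p) → ℝ) (i : κ) :
    blockSum c (updatePair x e v w) i = blockSum c x i +
      if c p = i then pad n p (v - x p + (w - fun k => x q (Fin.cast e k))) else 0 := by
  rw [← sub_eq_iff_eq_add', blockSum, blockSum, ← Finset.sum_sub_distrib, Finset.sum_filter]
  refine (Fintype.sum_eq_add p q hpq fun j hj => by
    simp [updatePair, update_of_ne hj.1, update_of_ne hj.2]).trans ?_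
  have hxq : pad n q (x q) = pad n p fun k => x q (Fin.cast e k) := by
    rw [← pad_finCast e.symm]; simp
  simp only [updatePair, update_self, update_of_ne hpq, ← hc, map_add, map_sub]
  rw [pad_finCast e.symm w, hxq]
  split_ifs <;> abel

variable [Fintype κ]

def blockEnergy (c : ι → κ) (x : ∀ j, Fin (n j) → ℝ) : ℝ :=
  ∑ i, blockSum c x i ⬝ᵥ blockSum c x i

lemma continuous_blockEnergy (c : ι → κ) : Continuous (blockEnergy (n := n) c) := by
  have := continuous_pad (n := n)
  unfold blockEnergy blockSum
  fun_prop

lemma blockEnergy_updatePair [DecidableEq ι] {p q : ι} (c : ι → κ) (x : ∀ j, Fin (n j) → ℝ)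
    (hpq : p ≠ q) (e : n p = n q) (hc : c p = c q) (v w : Fin (n p) → ℝ) :
    blockEnergy c (updatePair x e v w) - blockEnergy c x =
      (blockSum c x (c p) + pad n p (v - x p + (w - fun k => x q (Fin.cast e k)))) ⬝ᵥ
        (blockSum c x (c p) + pad n p (v - x p + (w - fun k => x q (Fin.cast e k)))) -
      blockSum c x (c p) ⬝ᵥ blockSum c x (c p) := by
  rw [blockEnergy, blockEnergy, ← Finset.sum_sub_distrib,
    Fintype.sum_eq_single (c p) fun i hi => by simp [blockSum_updatePair c x hpq e hc, Ne.symm hi]]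
  simp [blockSum_updatePair c x hpq e hc]

end BlockEnergy

lemma IsCompact.exists_isMaxOn_isMaxOn_eq {X α β : Type*} [TopologicalSpace X]
    [TopologicalSpace α] [LinearOrder α] [OrderClosedTopology α]
    [TopologicalSpace β] [LinearOrder β] [OrderClosedTopology β]
    {s : Set X} (hs : IsCompact s) (hne : s.Nonempty) {f : X → α} {g : X → β}
    (hf : Continuous f) (hg : Continuous g) :
    ∃ x ∈ s, IsMaxOn f s x ∧ IsMaxOn g {y ∈ s | f y = f x} x := by
  obtain ⟨x₀, hx₀, hfx₀⟩ := hs.exists_isMaxOn hne hf.continuousOn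
  have hS : IsCompact {y ∈ s | f y = f x₀} := hs.inter_right (isClosed_eq hf continuous_const)
  obtain ⟨x, ⟨hx, hfx⟩, hgx⟩ := hS.exists_isMaxOn ⟨x₀, hx₀, rfl⟩ hg.continuousOn
  exact ⟨x, hx, fun y hy => hfx ▸ hfx₀ hy, by rwa [hfx]⟩

theorem finCast_eq_of_isMaxOn {d : ℕ} {κ : Type*} [Fintype κ] [DecidableEq κ] {n : Fin d → ℕ}
    (T : (∀ j, Fin (n j)) → ℝ) (c : Fin d → κ) {u : ∀ j, Fin (n j) → ℝ} (hu : u ∈ unitTuples n)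
    (hmax : IsMaxOn (fun x => tinner T (dtens x) ^ 2) (unitTuples n) u)
    (htie : IsMaxOn (blockEnergy c)
      {x ∈ unitTuples n | tinner T (dtens x) ^ 2 = tinner T (dtens u) ^ 2} u)
    {p q : Fin d} (hc : c p = c q) (e : n p = n q) (hT : ∀ idx, T (swapAt p q e idx) = T idx) :
    (fun k => u q (Fin.cast e k)) = u p := by
  by_cases hpq : p = q
  · subst hpq
    simp
  by_contra hne
  set b : Fin (n p) → ℝ := fun k => u q (Fin.cast e k)
  set K := slotPairForm T u hpq e
  have hKab : K (u p) b = tinner T (dtens u) := by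
    rw [slotPairForm_apply, updatePair_self]
  have hKmax : ∀ v w, isUnitVec v → isUnitVec w → K v w ^ 2 ≤ K (u p) b ^ 2 := fun v w hv hw => by
    rw [hKab, slotPairForm_apply]
    exact hmax (updatePair_mem_unitTuples hu hpq e hv hw)
  have hb : isUnitVec b := (isUnitVec_comp_finCast e).mpr (hu q)
  obtain ⟨v, r, hv, hab, hr, hKv⟩ := K.exists_sq_apply_self_eq (slotPairForm_comm e T u hpq hT)
    (hu p) hb hKmax (Ne.symm hne)
  set S := blockSum c u (c p)
  obtain ⟨s, hs, hpos⟩ := exists_sq_eq_one_mul_pos hr (S ⬝ᵥ pad n p v)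
  have hsv : isUnitVec (s • v) := by
    rw [isUnitVec_iff_dotProduct_self, smul_dotProduct, dotProduct_smul,
      isUnitVec_iff_dotProduct_self.mp hv]
    simp [← sq, hs]
  have hx := updatePair_mem_unitTuples hu hpq e hsv hsv
  have hfx : tinner T (dtens (updatePair u e (s • v) (s • v))) ^ 2 = tinner T (dtens u) ^ 2 := by
    rw [← slotPairForm_apply T u hpq e, ← hKab, ← hKv]
    simp only [K, map_smul, LinearMap.smul_apply, smul_eq_mul]
    linear_combination (slotPairForm T u hpq e v v ^ 2 * (s ^ 2 + 1)) * hs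
  have hgain : 0 < blockEnergy c (updatePair u e (s • v) (s • v)) - blockEnergy c u := by
    have hδ : s • v - u p + (s • v - b) = (2 * s - r) • v := by
      linear_combination (norm := module) -hab
    rw [blockEnergy_updatePair c u hpq e hc, hδ, map_smul]
    simp only [add_dotProduct, dotProduct_add, smul_dotProduct, dotProduct_smul, smul_eq_mul,
      pad_dotProduct_pad, isUnitVec_iff_dotProduct_self.mp hv, dotProduct_comm (pad n p v)]
    linear_combination hpos
  exact (htie ⟨hx, hfx⟩).not_gt (sub_pos.mp hgain)

theorem stmt16_general {d m : ℕ} {n : Fin d → ℕ} (hn : ∀ j, 0 < n j)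
    (T : (∀ j, Fin (n j)) → ℝ)
    (c : Fin d → Fin m)
    (hdim : ∀ p q, c p = c q → n p = n q)
    (hsym : ∀ (p q : Fin d) (h : c p = c q) (idx : ∀ j, Fin (n j)),
      T (swapAt p q (hdim p q h) idx) = T idx) :
    ∃ (a : ℝ) (u : ∀ j, Fin (n j) → ℝ), (∀ j, isUnitVec (u j)) ∧
      (∀ (s : ℝ) (x : ∀ j, Fin (n j) → ℝ), (∀ j, isUnitVec (x j)) →
        hsNorm (T - a • dtens u) ≤ hsNorm (T - s • dtens x)) ∧
      ∀ (p q : Fin d) (h : c p = c q) (k : Fin (n p)),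
        u q (Fin.cast (hdim p q h) k) = u p k := by
  obtain ⟨u, hu, hmax, htie⟩ := (isCompact_unitTuples n).exists_isMaxOn_isMaxOn_eq
    (unitTuples_nonempty hn) ((continuous_tinner_dtens T).pow 2) (continuous_blockEnergy c)
  refine ⟨tinner T (dtens u), u, hu, fun s x hx => ?_, fun p q h k => ?_⟩
  · exact hsNorm_sub_smul_dtens_le T hu hx (hmax hx) s
  · exact congrFun (finCast_eq_of_isMaxOn T c hu hmax htie h _ (hsym p q h)) k

/-- Main theorem: if `[d] = α₁ ∪ ⋯ ∪ α_m` is a partition (given by the block map `c`)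
such that `T ≠ 0` is symmetric with respect to each block `α_j`, then `T` has a best rank
one approximation `a · u₁ ⊗ ⋯ ⊗ u_d` with `u_p = u_q` whenever `p, q` lie in the same
block. -/
theorem stmt16 {d m : ℕ} {n : Fin d → ℕ} (hn : ∀ j, 0 < n j)
    (T : (∀ j, Fin (n j)) → ℝ) (hT : T ≠ 0)
    (c : Fin d → Fin m)
    (hdim : ∀ p q, c p = c q → n p = n q)
    (hsym : ∀ (p q : Fin d) (h : c p = c q) (idx : ∀ j, Fin (n j)),
      T (swapAt p q (hdim p q h) idx) = T idx) :
    ∃ (a : ℝ) (u : ∀ j, Fin (n j) → ℝ), (∀ j, isUnitVec (u j)) ∧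
      (∀ (s : ℝ) (x : ∀ j, Fin (n j) → ℝ), (∀ j, isUnitVec (x j)) →
        hsNorm (T - a • dtens u) ≤ hsNorm (T - s • dtens x)) ∧
      ∀ (p q : Fin d) (h : c p = c q) (k : Fin (n p)),
        u q (Fin.cast (hdim p q h) k) = u p k :=
  stmt16_general hn T c hdim hsym

end
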